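/- Let f:ℝ^n_{≥0}→ℝ_{≥0} be a monotone symmetric norm, let ρ ≥ 0, and let y, z∈ℝ^n_{≥0}. If top_k(y) ≤ ρ·top_k(z) for every k∈[n], then f(y) ≤ ρ·f(z). -/

import Mathlib

open Finset

noncomputable section

/-- `x↓`: the vector `x` with its coordinates sorted in non-increasing order. -/
def sortDesc {n : ℕ} (x : Fin n → ℝ) : Fin n → ℝ :=
  fun i => x (Tuple.sort x i.rev)

/-- The top-`k` norm `top_k(x)`: the sum of the `k` largest coordinates of `x`. -/
def topK {n : ℕ} (x : Fin n → ℝ) (k : ℕ) : ℝ :=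
  ∑ i ∈ Finset.univ.filter (fun i : Fin n => (i : ℕ) < k), sortDesc x i

/-- The `w`-ordered norm `order(w; x) = Σ_i w_i · x↓_i`. -/
def orderNorm {n : ℕ} (w : Fin n → ℝ) (x : Fin n → ℝ) : ℝ :=
  ∑ i : Fin n, w i * sortDesc x i

/-- The difference vector `w'`: `w'_i = w_i − w_{i+1}` for `i < n−1` and `w'_{n-1} = w_{n-1}`
(0-indexed version of `w'_i = w_i − w_{i+1}` for `i ∈ [n−1]`, `w'_n = w_n`). -/
def wDiff {n : ℕ} (w : Fin n → ℝ) (i : Fin n) : ℝ :=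
  if h : (i : ℕ) + 1 < n then w i - w ⟨(i : ℕ) + 1, h⟩ else w i

/-- A monotone symmetric norm on the nonnegative orthant of `ι → ℝ`:
it is nonnegative, positively homogeneous, subadditive, monotone, and invariant
under coordinate permutations (all conditions imposed on nonnegative vectors). -/
structure IsMonoSymNorm {ι : Type*} (f : (ι → ℝ) → ℝ) : Prop where
  nonneg : ∀ x : ι → ℝ, (∀ i, 0 ≤ x i) → 0 ≤ f x
  homog : ∀ (a : ℝ), 0 ≤ a → ∀ x : ι → ℝ, (∀ i, 0 ≤ x i) →
    f (fun i => a * x i) = a * f x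
  subadd : ∀ x y : ι → ℝ, (∀ i, 0 ≤ x i) → (∀ i, 0 ≤ y i) →
    f (fun i => x i + y i) ≤ f x + f y
  mono : ∀ x y : ι → ℝ, (∀ i, 0 ≤ x i) → (∀ i, x i ≤ y i) → f x ≤ f y
  symm : ∀ (σ : Equiv.Perm ι) (x : ι → ℝ), (∀ i, 0 ≤ x i) → f (fun i => x (σ i)) = f x

namespace Aux

variable {n : ℕ}

def W (w : Fin n → ℝ) : ℕ → ℝ := fun j => if h : j < n then w ⟨j, h⟩ else 0

lemma wDiff_eq (w : Fin n → ℝ) (i : Fin n) : wDiff w i = W w i - W w (i + 1) := by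
  unfold wDiff W
  rcases lt_or_ge ((i : ℕ) + 1) n with h | h
  · simp [h, i.isLt]
  · have : ¬ ((i : ℕ) + 1 < n) := not_lt.2 h
    simp [this, i.isLt]

lemma tele (Wf : ℕ → ℝ) (a b : ℕ) (h : a ≤ b) :
    ∑ j ∈ Finset.Ico a b, (Wf j - Wf (j + 1)) = Wf a - Wf b := by
  induction b, h using Nat.le_induction with
  | base => simp
  | succ b hb ih => rw [Finset.sum_Ico_succ_top hb, ih]; ring

lemma abel (w x : Fin n → ℝ) :
    ∑ i : Fin n, w i * sortDesc x i = ∑ k : Fin n, wDiff w k * topK x (k + 1) := by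
  have expand : ∀ k : Fin n, wDiff w k * topK x (k + 1)
      = ∑ i : Fin n, (if (i : ℕ) ≤ (k : ℕ) then wDiff w k * sortDesc x i else 0) := by
    intro k
    rw [topK, Finset.mul_sum, Finset.sum_filter]
    congr 1; funext i
    simp only [Nat.lt_succ_iff]
  rw [Finset.sum_congr rfl (fun k _ => expand k), Finset.sum_comm]
  congr 1; funext i
  have inner : ∑ k : Fin n, (if (i : ℕ) ≤ (k : ℕ) then wDiff w k * sortDesc x i else 0)
      = (∑ k : Fin n, (if (i : ℕ) ≤ (k : ℕ) then wDiff w k else 0)) * sortDesc x i := by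
    rw [Finset.sum_mul]
    congr 1; funext k
    by_cases hik : (i : ℕ) ≤ (k : ℕ) <;> simp [hik]
  rw [inner]
  have step : ∑ k : Fin n, (if (i : ℕ) ≤ (k : ℕ) then wDiff w k else 0)
      = ∑ j ∈ Finset.Ico (i : ℕ) n, (W w j - W w (j + 1)) := by
    have h1 : ∑ k : Fin n, (if (i : ℕ) ≤ (k : ℕ) then wDiff w k else 0)
        = ∑ j ∈ Finset.range n, (if (i : ℕ) ≤ j then W w j - W w (j + 1) else 0) := by
      rw [Finset.sum_range fun j => _]
      apply Finset.sum_congr rfl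
      intro k _
      by_cases hik : (i : ℕ) ≤ (k : ℕ) <;> simp [hik, wDiff_eq]
    rw [h1, ← Finset.sum_filter]
    congr 1
    ext j
    simp only [Finset.mem_filter, Finset.mem_range, Finset.mem_Ico]
    omega
  rw [step, tele _ _ _ (le_of_lt i.isLt)]
  have hWn : W w n = 0 := by simp [W]
  have hWi : W w (i : ℕ) = w i := by simp [W, i.isLt]
  rw [hWn, hWi, sub_zero]

/-- the sorting permutation: `sortDesc x = x ∘ sortPerm x`. -/
def sortPerm (x : Fin n → ℝ) : Equiv.Perm (Fin n) :=
  (Fin.revPerm).trans (Tuple.sort x)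

lemma sortDesc_eq (x : Fin n → ℝ) (i : Fin n) : sortDesc x i = x (sortPerm x i) := rfl

lemma sortDesc_antitone (x : Fin n → ℝ) : Antitone (sortDesc x) := by
  intro i j hij
  exact Tuple.monotone_sort x (Fin.rev_le_rev.2 hij)

lemma sortDesc_nonneg {x : Fin n → ℝ} (hx : ∀ i, 0 ≤ x i) (i : Fin n) : 0 ≤ sortDesc x i :=
  hx _

lemma wDiff_nonneg {w : Fin n → ℝ} (hw : Antitone w) (h0 : ∀ i, 0 ≤ w i) (i : Fin n) :
    0 ≤ wDiff w i := by
  unfold wDiff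
  split
  · rename_i hlt
    have : w ⟨(i : ℕ) + 1, hlt⟩ ≤ w i := hw (by simp [Fin.le_def])
    linarith
  · exact h0 i

/-- Rearrangement: `∑ aᵢbᵢ ≤ ∑ a↓ᵢ b↓ᵢ`. -/
lemma sum_mul_le_sorted (a b : Fin n → ℝ) :
    ∑ i : Fin n, a i * b i ≤ ∑ i : Fin n, sortDesc a i * sortDesc b i := by
  set p := sortPerm a with hp
  set q := sortPerm b with hq
  have key : ∑ i : Fin n, a i * b i
      = ∑ i : Fin n, sortDesc a i * sortDesc b ((p.trans q.symm) i) := by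
    rw [← Equiv.sum_comp p (fun i => a i * b i)]
    apply Finset.sum_congr rfl
    intro i _
    simp [sortDesc_eq, hp, hq]
  rw [key]
  have hm : Monovary (sortDesc a) (sortDesc b) :=
    (sortDesc_antitone a).monovary (sortDesc_antitone b)
  simpa [smul_eq_mul] using hm.sum_smul_comp_perm_le_sum_smul (σ := p.trans q.symm)

end Aux

/-- If `top_k(y) ≤ ρ·top_k(z)` for every `k ∈ [n]`, then
`f(y) ≤ ρ·f(z)` for every monotone symmetric norm `f`. -/
theorem norm_le_of_topK_le (n : ℕ) (f : (Fin n → ℝ) → ℝ) (hf : IsMonoSymNorm f)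
    (ρ : ℝ) (hρ : 0 ≤ ρ) (y z : Fin n → ℝ)
    (hy : ∀ i, 0 ≤ y i) (hz : ∀ i, 0 ≤ z i)
    (h : ∀ k : ℕ, 1 ≤ k → k ≤ n → topK y k ≤ ρ * topK z k) :
    f y ≤ ρ * f z := by
  have hf0 : f (fun _ : Fin n => (0:ℝ)) = 0 := by
    have h1 := hf.homog 0 le_rfl (fun _ => 0) (fun _ => le_rfl)
    simpa using h1
  by_cases hy0 : y = 0
  · have h0 : f y = 0 := by rw [hy0]; exact hf0
    rw [h0]
    exact mul_nonneg hρ (hf.nonneg z hz)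
  · set F : (Fin n → ℝ) → ℝ := fun x => f (fun i => |x i|) with hF
    have hFnonneg : ∀ x, 0 ≤ F x := fun x => hf.nonneg _ (fun i => abs_nonneg _)
    have hFhomog : ∀ c : ℝ, 0 < c → ∀ x, F (c • x) = c * F x := by
      intro c hc x
      have h1 : (fun i => |(c • x) i|) = fun i => c * |x i| := by
        funext i; simp [abs_mul, abs_of_pos hc]
      rw [hF]
      simp only [h1]
      exact hf.homog c hc.le _ (fun i => abs_nonneg _)
    have hFadd : ∀ x u : Fin n → ℝ, F (x + u) ≤ F x + F u := by
      intro x u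
      calc F (x + u) = f (fun i => |x i + u i|) := rfl
        _ ≤ f (fun i => |x i| + |u i|) :=
            hf.mono _ _ (fun i => abs_nonneg _) (fun i => abs_add_le _ _)
        _ ≤ F x + F u := hf.subadd _ _ (fun i => abs_nonneg _) (fun i => abs_nonneg _)
    have hFy : F y = f y := by
      show f (fun i => |y i|) = f y
      congr 1
      funext i
      exact abs_of_nonneg (hy i)
    have Hsingle : ∀ c : ℝ, c • y = 0 → c • F y = (0:ℝ) := by
      intro c hc
      rcases smul_eq_zero.1 hc with h' | h'
      · simp [h']
      · exact absurd h' hy0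
    set pm := LinearPMap.mkSpanSingleton' (σ := RingHom.id ℝ) y (F y) Hsingle with hpm
    have hpmle : ∀ x : pm.domain, pm x ≤ F x := by
      rintro ⟨x, hx⟩
      have hx' : x ∈ Submodule.span ℝ {y} := hx
      obtain ⟨c, rfl⟩ := Submodule.mem_span_singleton.1 hx'
      have happ : pm ⟨c • y, hx⟩ = c • F y :=
        LinearPMap.mkSpanSingleton'_apply y (F y) Hsingle c hx
      refine le_trans (le_of_eq happ) ?_
      show c • F y ≤ F (c • y)
      rcases lt_trichotomy c 0 with hc | hc | hc
      · have h5 : c • F y ≤ 0 := smul_nonpos_of_nonpos_of_nonneg hc.le (hFnonneg y)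
        exact h5.trans (hFnonneg _)
      · subst hc
        rw [zero_smul ℝ (F y)]
        exact hFnonneg _
      · rw [hFhomog c hc, smul_eq_mul]
    obtain ⟨g, hg_eq, hg_le⟩ := exists_extension_of_le_sublinear pm F hFhomog hFadd hpmle
    have hgy : g y = f y := by
      have hmem : y ∈ pm.domain := Submodule.mem_span_singleton_self y
      calc g y = pm ⟨y, hmem⟩ := hg_eq ⟨y, hmem⟩
        _ = F y := LinearPMap.mkSpanSingleton'_apply_self y (F y) Hsingle hmem
        _ = f y := hFy
    set gc : Fin n → ℝ := fun i => g (fun j => if i = j then (1:ℝ) else 0) with hgc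
    set a : Fin n → ℝ := fun i => |gc i| with ha
    have hann : ∀ i, 0 ≤ a i := fun i => abs_nonneg _
    -- Step A: f y ≤ ∑ a i * y i
    have hA : f y ≤ ∑ i : Fin n, a i * y i := by
      rw [← hgy, LinearMap.pi_apply_eq_sum_univ g y]
      apply Finset.sum_le_sum
      intro i _
      rw [smul_eq_mul, ha, mul_comm (|gc i|) (y i)]
      exact mul_le_mul_of_nonneg_left (le_abs_self _) (hy i)
    -- Step A2: rearrangement
    have hA2 : ∑ i : Fin n, a i * y i ≤ ∑ i : Fin n, sortDesc a i * sortDesc y i :=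
      Aux.sum_mul_le_sorted a y
    set w : Fin n → ℝ := sortDesc a with hw
    have hwanti : Antitone w := Aux.sortDesc_antitone a
    have hwnn : ∀ i, 0 ≤ w i := Aux.sortDesc_nonneg hann
    -- Step B: Abel summation and the hypothesis
    have hB : ∑ i : Fin n, w i * sortDesc y i ≤ ρ * ∑ i : Fin n, w i * sortDesc z i := by
      rw [Aux.abel w y, Aux.abel w z, Finset.mul_sum]
      apply Finset.sum_le_sum
      intro k _
      have h1 : topK y ((k : ℕ) + 1) ≤ ρ * topK z ((k : ℕ) + 1) :=
        h ((k : ℕ) + 1) (by omega) (by have := k.isLt; omega)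
      have h2 : 0 ≤ wDiff w k := Aux.wDiff_nonneg hwanti hwnn k
      calc wDiff w k * topK y ((k : ℕ) + 1) ≤ wDiff w k * (ρ * topK z ((k : ℕ) + 1)) :=
            mul_le_mul_of_nonneg_left h1 h2
        _ = ρ * (wDiff w k * topK z ((k : ℕ) + 1)) := by ring
    -- Step C: ∑ w i * sortDesc z i ≤ f z
    set p := Aux.sortPerm a with hp
    set u : Fin n → ℝ := fun j => (if gc j < 0 then (-1:ℝ) else 1) * sortDesc z (p.symm j)
      with hu
    have habs : ∀ j, |u j| = sortDesc z (p.symm j) := by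
      intro j
      rw [hu]
      dsimp only
      split <;> simp [abs_of_nonneg (Aux.sortDesc_nonneg hz _)]
    have hgu : g u = ∑ i : Fin n, w i * sortDesc z i := by
      rw [LinearMap.pi_apply_eq_sum_univ g u]
      have hterm : ∀ j, u j • gc j = a j * sortDesc z (p.symm j) := by
        intro j
        rw [smul_eq_mul, hu]
        dsimp only
        rcases lt_or_ge (gc j) 0 with hneg | hpos
        · rw [if_pos hneg, ha]; dsimp only; rw [abs_of_neg hneg]; ring
        · rw [if_neg (not_lt.2 hpos), ha]; dsimp only; rw [abs_of_nonneg hpos]; ring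
      calc ∑ j : Fin n, u j • g (fun j' => if j = j' then (1:ℝ) else 0)
          = ∑ j : Fin n, a j * sortDesc z (p.symm j) :=
            Finset.sum_congr rfl (fun j _ => hterm j)
        _ = ∑ i : Fin n, a (p i) * sortDesc z (p.symm (p i)) :=
            (Equiv.sum_comp p (fun j => a j * sortDesc z (p.symm j))).symm
        _ = ∑ i : Fin n, w i * sortDesc z i := by
            apply Finset.sum_congr rfl
            intro i _
            rw [Equiv.symm_apply_apply, hw, Aux.sortDesc_eq a i, hp]
    have hFu : F u ≤ f z := by
      have h1 : (fun i => |u i|) = fun i => sortDesc z (p.symm i) := funext habs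
      rw [hF]
      dsimp only
      rw [h1]
      have h2 : f (fun i => sortDesc z (p.symm i)) = f (sortDesc z) :=
        hf.symm p.symm (sortDesc z) (Aux.sortDesc_nonneg hz)
      have h3 : f (sortDesc z) = f z := by
        have h4 := hf.symm (Aux.sortPerm z) z hz
        rw [show sortDesc z = fun i => z (Aux.sortPerm z i) from funext (Aux.sortDesc_eq z)]
        exact h4
      rw [h2, h3]
    have hC : ∑ i : Fin n, w i * sortDesc z i ≤ f z := by
      rw [← hgu]
      exact le_trans (hg_le u) hFu
    calc f y ≤ ∑ i : Fin n, a i * y i := hA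
      _ ≤ ∑ i : Fin n, w i * sortDesc y i := hA2
      _ ≤ ρ * ∑ i : Fin n, w i * sortDesc z i := hB
      _ ≤ ρ * f z := mul_le_mul_of_nonneg_left hC hρ

end
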